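/- arXiv:2601.08492 — 3 statements merged into one kernel-verified Lean document; each statement's English description precedes it below -/
import Mathlib

section
/- Let $f(n) = \sum_{i=1}^{M} p_i(n) \cdot b_i^n$ where the $b_i > 0$ are pairwise distinct positive reals and each $p_i$ is a nonzero real polynomial. If $f$ is not identically zero, then $f$ (as a function of a real variable $n$) has at most $\left(\sum_{i=1}^M (\deg p_i + 1)\right) - 1$ real roots. -/
/-!
Pólya's argument is induction on `N = ∑ (deg pᵢ + 1)`, with zero polynomials counting `0`.
Dividing by `b_jˣ` for some `j` with `p_j ≠ 0` keeps the zeros and turns `b_j` into `1`.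
Differentiating then lowers the degree of `p_j` by one (or kills the term if `p_j` is constant),
while every other term `pᵢ(x) cᵢˣ` becomes `(pᵢ' + log cᵢ · pᵢ)(x) cᵢˣ`, of the same degree as
`log cᵢ ≠ 0`. So the derivative has weight `N - 1`, and by Rolle's theorem a function has at
most one zero more than its derivative. If the derivative vanishes identically, the normalized
sum is the nonzero constant `p_j` and has no zeros at all.
-/

open Polynomial Set

theorem finite_and_ncard_zeros_le_of_hasDerivAt {f f' : ℝ → ℝ}
    (hf : ∀ x, HasDerivAt f (f' x) x) (hf' : {x | f' x = 0}.Finite) :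
    {x | f x = 0}.Finite ∧ {x | f x = 0}.ncard ≤ {x | f' x = 0}.ncard + 1 := by
  have hcard : ∀ t : Finset ℝ, ↑t ⊆ {x | f x = 0} → t.card ≤ {x | f' x = 0}.ncard + 1 := by
    intro t ht
    rw [ncard_eq_toFinset_card _ hf']
    refine Finset.card_le_of_interleaved fun x hx y hy hxy _ => ?_
    obtain ⟨z, hz, hz'⟩ := exists_hasDerivAt_eq_zero hxy
      (fun z _ => (hf z).continuousAt.continuousWithinAt)
      ((ht hx).trans (ht hy).symm) (fun z _ => hf z)
    exact ⟨z, hf'.mem_toFinset.2 hz', hz⟩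
  have hfin : {x | f x = 0}.Finite := by
    by_contra hinf
    obtain ⟨t, ht, htcard⟩ := Set.Infinite.exists_subset_card_eq hinf ({x | f' x = 0}.ncard + 2)
    have := hcard t ht
    omega
  refine ⟨hfin, ?_⟩
  rw [ncard_eq_toFinset_card _ hfin]
  exact hcard _ (by simp)

namespace Polynomial

variable {R : Type*} [Semiring R] {p : R[X]}

/-- `natDegree p + 1`, and `0` for `p = 0` since `⊥ + 1 = ⊥`. -/
noncomputable def degreeSucc (p : R[X]) : ℕ := (p.degree + 1).unbotD 0

theorem degreeSucc_of_ne_zero (hp : p ≠ 0) : degreeSucc p = p.natDegree + 1 := by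
  rw [degreeSucc, degree_eq_natDegree hp]
  rfl

@[simp]
theorem degreeSucc_zero : degreeSucc (0 : R[X]) = 0 := rfl

theorem degreeSucc_eq_zero : degreeSucc p = 0 ↔ p = 0 := by
  rcases eq_or_ne p 0 with rfl | hp
  · simp
  · simp [degreeSucc_of_ne_zero hp, hp]

theorem degreeSucc_derivative_add_one [IsAddTorsionFree R] (hp : p ≠ 0) :
    degreeSucc (derivative p) + 1 = degreeSucc p := by
  rw [degreeSucc_of_ne_zero hp]
  by_cases hdeg : p.natDegree = 0
  · simp [derivative_eq_zero.2 hdeg, hdeg, degreeSucc]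
  · rw [degreeSucc_of_ne_zero (derivative_ne_zero.2 hdeg), natDegree_derivative]
    omega

theorem degreeSucc_derivative_add_C_mul [NoZeroDivisors R] {a : R} (ha : a ≠ 0) :
    degreeSucc (derivative p + C a * p) = degreeSucc p := by
  rcases eq_or_ne p 0 with rfl | hp
  · simp
  rw [degreeSucc, degreeSucc, degree_add_eq_right_of_degree_lt, degree_C_mul ha]
  exact (degree_C_mul ha).symm ▸ degree_derivative_lt hp

end Polynomial

section ExpPoly

variable {ι : Type*} {s : Finset ι} {b : ι → ℝ} {p : ι → ℝ[X]}

noncomputable def expPoly (s : Finset ι) (b : ι → ℝ) (p : ι → ℝ[X]) (x : ℝ) : ℝ :=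
  ∑ i ∈ s, (p i).eval x * b i ^ x

noncomputable def derivCoeffs (b : ι → ℝ) (p : ι → ℝ[X]) (i : ι) : ℝ[X] :=
  derivative (p i) + C (Real.log (b i)) * p i

theorem hasDerivAt_expPoly (hb : ∀ i ∈ s, 0 < b i) (x : ℝ) :
    HasDerivAt (expPoly s b p) (expPoly s b (derivCoeffs b p) x) x := by
  unfold expPoly
  refine HasDerivAt.fun_sum fun i hi => ?_
  refine (((p i).hasDerivAt x).fun_mul
    (Real.hasStrictDerivAt_const_rpow (hb i hi) x).hasDerivAt).congr_deriv ?_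
  simp only [derivCoeffs, eval_add, eval_mul, eval_C]
  ring

theorem expPoly_div_eq_zero_iff (hb : ∀ i ∈ s, 0 ≤ b i) {a : ℝ} (ha : 0 < a) (x : ℝ) :
    expPoly s (fun i => b i / a) p x = 0 ↔ expPoly s b p x = 0 := by
  have hax : a ^ x ≠ 0 := (Real.rpow_pos_of_pos ha x).ne'
  have : expPoly s (fun i => b i / a) p x * a ^ x = expPoly s b p x := by
    rw [expPoly, expPoly, Finset.sum_mul]
    refine Finset.sum_congr rfl fun i hi => ?_
    rw [Real.div_rpow (hb i hi) ha.le, mul_assoc, div_mul_cancel₀ _ hax]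
  rw [← this, mul_eq_zero, or_iff_left hax]

theorem derivCoeffs_of_eq_one {i : ι} (hbi : b i = 1) :
    derivCoeffs b p i = derivative (p i) := by
  simp [derivCoeffs, hbi]

theorem degreeSucc_derivCoeffs {i : ι} (hb : 0 < b i) (hbi : b i ≠ 1) :
    degreeSucc (derivCoeffs b p i) = degreeSucc (p i) :=
  degreeSucc_derivative_add_C_mul (Real.log_ne_zero_of_pos_of_ne_one hb hbi)

theorem sum_degreeSucc_derivCoeffs_add_one (hb : ∀ i ∈ s, 0 < b i) (hbinj : InjOn b s)
    {j : ι} (hj : j ∈ s) (hbj : b j = 1) (hpj : p j ≠ 0) :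
    ∑ i ∈ s, degreeSucc (derivCoeffs b p i) + 1 = ∑ i ∈ s, degreeSucc (p i) := by
  classical
  rw [← Finset.add_sum_erase s _ hj, ← Finset.add_sum_erase s _ hj, derivCoeffs_of_eq_one hbj,
    ← degreeSucc_derivative_add_one hpj, add_right_comm]
  congr 1
  refine Finset.sum_congr rfl fun i hi => ?_
  obtain ⟨hij, hi⟩ := Finset.mem_erase.1 hi
  exact degreeSucc_derivCoeffs (hb i hi) fun h => hij (hbinj hi hj (h.trans hbj.symm))

theorem expPoly_ne_zero_of_derivCoeffs_eq_zero (hb : ∀ i ∈ s, 0 < b i) (hbinj : InjOn b s)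
    {j : ι} (hj : j ∈ s) (hbj : b j = 1) (hpj : p j ≠ 0)
    (h : ∀ i ∈ s, derivCoeffs b p i = 0) (x : ℝ) : expPoly s b p x ≠ 0 := by
  obtain ⟨a, ha⟩ : ∃ a, p j = C a :=
    ⟨_, eq_C_of_derivative_eq_zero (derivCoeffs_of_eq_one hbj ▸ h j hj)⟩
  have hp : ∀ i ∈ s, i ≠ j → p i = 0 := fun i hi hij => by
    rw [← degreeSucc_eq_zero, ← degreeSucc_derivCoeffs (hb i hi)
      fun h => hij (hbinj hi hj (h.trans hbj.symm)), h i hi, degreeSucc_zero]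
  rw [expPoly, Finset.sum_eq_single_of_mem j hj fun i hi hij => by simp [hp i hi hij],
    ha, hbj, Real.one_rpow, eval_C, mul_one]
  rintro rfl
  exact hpj (by simpa using ha)

theorem finite_and_ncard_expPoly_zeros_le (hb : ∀ i ∈ s, 0 < b i) (hbinj : InjOn b s)
    (hp : ∃ i ∈ s, p i ≠ 0) :
    {x | expPoly s b p x = 0}.Finite ∧
      {x | expPoly s b p x = 0}.ncard ≤ (∑ i ∈ s, degreeSucc (p i)) - 1 := by
  induction hN : ∑ i ∈ s, degreeSucc (p i) using Nat.strong_induction_on generalizing b p with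
  | _ N ih =>
  obtain ⟨j, hj, hpj⟩ := hp
  have hbj_pos := hb j hj
  set c : ι → ℝ := fun i => b i / b j
  have hc : ∀ i ∈ s, 0 < c i := fun i hi => div_pos (hb i hi) hbj_pos
  have hcinj : InjOn c s := fun i hi i' hi' h => hbinj hi hi' ((div_left_inj' hbj_pos.ne').1 h)
  have hcj : c j = 1 := div_self hbj_pos.ne'
  have hzeros : {x | expPoly s b p x = 0} = {x | expPoly s c p x = 0} := by
    ext x
    exact (expPoly_div_eq_zero_iff (fun i hi => (hb i hi).le) hbj_pos x).symm
  have hweight := sum_degreeSucc_derivCoeffs_add_one hc hcinj hj hcj hpj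
  rw [hzeros]
  by_cases hq : ∃ i ∈ s, derivCoeffs c p i ≠ 0
  · obtain ⟨hfin_deriv, hcard_deriv⟩ := ih _ (by omega) hc hcinj hq rfl
    obtain ⟨hfin, hcard⟩ :=
      finite_and_ncard_zeros_le_of_hasDerivAt (hasDerivAt_expPoly hc) hfin_deriv
    obtain ⟨i, hi, hqi⟩ := hq
    have hpos : 0 < ∑ i ∈ s, degreeSucc (derivCoeffs c p i) :=
      Finset.sum_pos' (fun _ _ => Nat.zero_le _)
        ⟨i, hi, Nat.pos_of_ne_zero (degreeSucc_eq_zero.not.2 hqi)⟩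
    exact ⟨hfin, by omega⟩
  · push Not at hq
    simp [expPoly_ne_zero_of_derivCoeffs_eq_zero hc hcinj hj hcj hpj hq]

end ExpPoly

theorem stmt_0_general (M : ℕ) (hM : 1 ≤ M) (b : Fin M → ℝ) (hb : ∀ i, 0 < b i)
    (hbinj : Function.Injective b)
    (p : Fin M → Polynomial ℝ) (hp : ∀ i, p i ≠ 0)
    (f : ℝ → ℝ)
    (hf : ∀ n : ℝ, f n = ∑ i, (p i).eval n * (b i) ^ n) :
    {n : ℝ | f n = 0}.Finite ∧
      {n : ℝ | f n = 0}.ncard ≤ (∑ i, ((p i).natDegree + 1)) - 1 := by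
  have hzeros : {n : ℝ | f n = 0} = {x | expPoly Finset.univ b p x = 0} := by
    simp only [hf, expPoly]
  have hweight : ∑ i, ((p i).natDegree + 1) = ∑ i, degreeSucc (p i) :=
    Finset.sum_congr rfl fun i _ => (degreeSucc_of_ne_zero (hp i)).symm
  rw [hzeros, hweight]
  exact finite_and_ncard_expPoly_zeros_le (fun i _ => hb i) hbinj.injOn
    ⟨⟨0, hM⟩, Finset.mem_univ _, hp _⟩

/-- Pólya: a nonzero exponential sum `∑ pᵢ(n) bᵢⁿ` with pairwise distinct positive
bases and nonzero polynomials has at most `(∑ (deg pᵢ + 1)) - 1` real roots. -/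
theorem stmt_0 (M : ℕ) (hM : 1 ≤ M) (b : Fin M → ℝ) (hb : ∀ i, 0 < b i)
    (hbinj : Function.Injective b)
    (p : Fin M → Polynomial ℝ) (hp : ∀ i, p i ≠ 0)
    (f : ℝ → ℝ)
    (hf : ∀ n : ℝ, f n = ∑ i, (p i).eval n * (b i) ^ n)
    (hnz : ∃ n : ℝ, f n ≠ 0) :
    {n : ℝ | f n = 0}.Finite ∧
      {n : ℝ | f n = 0}.ncard ≤ (∑ i, ((p i).natDegree + 1)) - 1 :=
  stmt_0_general M hM b hb hbinj p hp f hf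
end

section
/- Consider the loop over $\mathbb{R}^2$ with guard $0 \le x + y \le 10$ and update $(x, y) \mapsto (x + 1, 2y)$. There exists $c \in \mathbb{N}$ (indeed $c = 66$ suffices) such that for every initial $(x, y) \in \mathbb{R}^2$ there exists $i \le c$ with $\neg(0 \le (x + i) + 2^i y \le 10)$, i.e., the loop terminates within $c$ iterations from every initial state. -/
/-- The loop `while 0 ≤ x + y ≤ 10 do (x,y) := (x+1, 2y)` has constant runtime:
some `c ≤ 66` bounds the number of iterations for every initial state. -/
theorem stmt_6 :
    ∃ c : ℕ, c ≤ 66 ∧ ∀ x y : ℝ, ∃ i : ℕ, i ≤ c ∧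
      ¬ (0 ≤ (x + i) + 2 ^ i * y ∧ (x + i) + 2 ^ i * y ≤ 10) := by
  refine ⟨66, le_refl _, fun x y => ?_⟩
  by_contra h
  push_neg at h
  obtain ⟨h0a, h0b⟩ := h 0 (by norm_num)
  obtain ⟨h1a, h1b⟩ := h 65 (by norm_num)
  obtain ⟨h2a, h2b⟩ := h 66 (by norm_num)
  push_cast at h0a h0b h1a h1b h2a h2b
  have ha : (1:ℝ) ≤ 2 ^ 65 := one_le_pow₀ (by norm_num)
  have hpow : (2:ℝ) ^ 66 = 2 * 2 ^ 65 := by ring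
  rw [hpow] at h2a h2b
  set a : ℝ := 2 ^ 65 with hadef
  -- from steps 65 and 66: -11 ≤ a*y ≤ 9
  have ht1 : a * y ≤ 9 := by linarith
  have ht2 : -11 ≤ a * y := by linarith
  -- bound y : -11 ≤ y ≤ 9
  have hy1 : y ≤ 9 := by nlinarith
  have hy2 : -11 ≤ y := by nlinarith
  linarith
end

section
/- Let $A \in \mathbb{Q}^{d\times d}$, $\vec{b} \in \mathbb{Q}^d$, $\mathrm{up}(\vec{x}) = A\vec{x} + \vec{b}$, and let $\varphi$ be a conjunction of linear inequalities with rational coefficients over $\vec{x}$. Then $(\exists c \in \mathbb{N}.\ \forall \vec{x} \in \mathbb{R}^d.\ \exists i \le c.\ \neg\varphi(\mathrm{up}^i(\vec{x})))$ holds iff $(\exists c \in \mathbb{N}.\ \forall \vec{x} \in \mathbb{Q}^d.\ \exists i \le c.\ \neg\varphi(\mathrm{up}^i(\vec{x})))$ holds. -/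
/-!
A real point satisfying finitely many rational linear constraints can be pushed to a rational one
by a `ℚ`-linear map `G : ℝ → ℚ` with `G 1 = 1`: such a map commutes with every rational affine
map, hence with the loop update and its iterates, and it keeps the signs of the finitely many guard
values met along the first `c` iterations. Such a `G` exists because, on the finite-dimensional
`ℚ`-span of these values, the functional sending a basis `(βₘ)` to a vector `t` is the inclusion at
`t = β`; positivity is an open condition in `t`, so a rational `t` close to `β` works, and the
resulting functional extends to all of `ℝ`.
-/

open Filter Topology Module

theorem Real.exists_ratLinearMap_pos {κ : Type*} [Finite κ] (v : κ → ℝ) :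
    ∃ G : ℝ →ₗ[ℚ] ℚ, ∀ k, 0 < v k → 0 < G (v k) := by
  set W := Submodule.span ℚ (Set.range v)
  have : FiniteDimensional ℚ W := .span_of_finite ℚ (Set.finite_range v)
  let B := Module.finBasis ℚ W
  let eval (t : Fin (finrank ℚ W) → ℝ) : W →ₗ[ℚ] ℝ := B.constr ℚ t
  let w (k : κ) : W := ⟨v k, Submodule.subset_span (Set.mem_range_self k)⟩
  have eval_basis : eval (fun m => (B m : ℝ)) = W.subtype := B.constr_self ℚ W.subtype
  have eval_continuous (u : W) : Continuous fun t => eval t u := by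
    simp only [eval, B.constr_apply_fintype ℚ, Rat.smul_def]
    fun_prop
  have near : ∀ᶠ t in 𝓝 (fun m => (B m : ℝ)), ∀ k, 0 < v k → 0 < eval t (w k) := by
    refine eventually_all.2 fun k => ?_
    by_cases hk : 0 < v k
    · have := (eval_continuous (w k)).continuousAt (x := fun m => (B m : ℝ))
      rw [ContinuousAt, eval_basis] at this
      filter_upwards [this.eventually (lt_mem_nhds hk)] with t ht using fun _ => ht
    · exact .of_forall fun _ h => absurd h hk
  obtain ⟨t, ht⟩ := (DenseRange.piMap fun _ => Rat.denseRange_cast).mem_nhds near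
  obtain ⟨G, hG⟩ := LinearMap.exists_extend (B.constr ℚ t)
  refine ⟨G, fun k hk => ?_⟩
  have hGw : G (v k) = B.constr ℚ t (w k) := by rw [← hG]; rfl
  have := ht k hk
  simp only [eval, B.constr_apply_fintype ℚ, Rat.smul_def, Pi.map_apply] at this
  rw [hGw, B.constr_apply_fintype ℚ]
  simp only [smul_eq_mul]
  exact_mod_cast this

theorem Real.exists_ratLinearMap_one_pos {κ : Type*} [Finite κ] (v : κ → ℝ) :
    ∃ G : ℝ →ₗ[ℚ] ℚ, G 1 = 1 ∧ ∀ k, 0 < v k → 0 < G (v k) := by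
  obtain ⟨G, hG⟩ := Real.exists_ratLinearMap_pos fun o : Option κ => o.elim 1 v
  have hG1 : 0 < G 1 := hG none one_pos
  refine ⟨(G 1)⁻¹ • G, by simp [hG1.ne'], fun k hk => ?_⟩
  simpa using mul_pos (inv_pos.2 hG1) (hG (some k) hk)

section RatLinearLoop

variable {ι κ K L : Type*} [Fintype ι]

def ratAffine [DivisionRing K] (a : ι → ℚ) (c : ℚ) (x : ι → K) : K :=
  ∑ j, (a j : K) * x j + c

def ratAffineUpdate [DivisionRing K] (A : Matrix ι ι ℚ) (b : ι → ℚ) (x : ι → K) : ι → K :=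
  fun i => ratAffine (A i) (b i) x

def ratLinearGuard [DivisionRing K] [LinearOrder K] (C : κ → ι → ℚ) (c : κ → ℚ)
    (strict : κ → Bool) (x : ι → K) : Prop :=
  ∀ k, if strict k then 0 < ratAffine (C k) (c k) x else 0 ≤ ratAffine (C k) (c k) x

section Transfer

variable [DivisionRing K] [CharZero K] [DivisionRing L] [CharZero L]

theorem LinearMap.map_ratAffine (F : K →ₗ[ℚ] L) (hF : F 1 = 1) (a : ι → ℚ) (c : ℚ)
    (x : ι → K) : F (ratAffine a c x) = ratAffine a c (F ∘ x) := by
  have hcast (q : ℚ) : F q = q := by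
    rw [← Rat.smul_one_eq_cast, map_smul, hF, Rat.smul_one_eq_cast]
  simp [ratAffine, map_sum, ← Rat.smul_def, hcast]

theorem semiconj_ratAffineUpdate (F : K →ₗ[ℚ] L) (hF : F 1 = 1) (A : Matrix ι ι ℚ)
    (b : ι → ℚ) : Function.Semiconj (⇑F ∘ ·) (ratAffineUpdate A b) (ratAffineUpdate A b) :=
  fun x => funext fun i => F.map_ratAffine hF (A i) (b i) x

variable [LinearOrder K] [LinearOrder L]

theorem ratLinearGuard_comp (F : K →ₗ[ℚ] L) (hF : F 1 = 1)
    {C : κ → ι → ℚ} {c : κ → ℚ} {strict : κ → Bool} {x : ι → K}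
    (hpos : ∀ k, 0 < ratAffine (C k) (c k) x → 0 < F (ratAffine (C k) (c k) x))
    (hx : ratLinearGuard C c strict x) : ratLinearGuard C c strict (F ∘ x) := by
  intro k
  have hnonneg (h : 0 ≤ ratAffine (C k) (c k) x) : 0 ≤ F (ratAffine (C k) (c k) x) := by
    rcases h.eq_or_lt with h | h
    · rw [← h, map_zero]
    · exact (hpos k h).le
  have := hx k
  rw [← F.map_ratAffine hF]
  split_ifs at this ⊢
  exacts [hpos k this, hnonneg this]

end Transfer

end RatLinearLoop

/-- A linear loop with rational coefficients has constant runtime over ℝ iff it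
has constant runtime over ℚ. The guard is a conjunction of `m` rational linear
inequalities, strict or non-strict. -/
theorem stmt_16 (d m : ℕ) (A : Matrix (Fin d) (Fin d) ℚ) (b : Fin d → ℚ)
    (C : Fin m → Fin d → ℚ) (c : Fin m → ℚ) (strict : Fin m → Bool)
    (upR : (Fin d → ℝ) → (Fin d → ℝ))
    (hupR : ∀ x, upR x = (A.map (fun q => (q : ℝ))).mulVec x + fun i => (b i : ℝ))
    (upQ : (Fin d → ℚ) → (Fin d → ℚ))
    (hupQ : ∀ x, upQ x = A.mulVec x + b)
    (φR : (Fin d → ℝ) → Prop)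
    (hφR : ∀ x, φR x ↔ ∀ i,
      if strict i then 0 < ∑ j, (C i j : ℝ) * x j + (c i : ℝ)
      else 0 ≤ ∑ j, (C i j : ℝ) * x j + (c i : ℝ))
    (φQ : (Fin d → ℚ) → Prop)
    (hφQ : ∀ x, φQ x ↔ ∀ i,
      if strict i then 0 < ∑ j, C i j * x j + c i
      else 0 ≤ ∑ j, C i j * x j + c i) :
    (∃ cst : ℕ, ∀ x : Fin d → ℝ, ∃ i ≤ cst, ¬ φR (upR^[i] x)) ↔
      (∃ cst : ℕ, ∀ x : Fin d → ℚ, ∃ i ≤ cst, ¬ φQ (upQ^[i] x)) := by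
  obtain rfl : upR = ratAffineUpdate A b :=
    funext fun x => by ext i; simp [hupR, ratAffineUpdate, ratAffine, Matrix.mulVec, dotProduct]
  obtain rfl : upQ = ratAffineUpdate A b :=
    funext fun x => by ext i; simp [hupQ, ratAffineUpdate, ratAffine, Matrix.mulVec, dotProduct]
  obtain rfl : φR = ratLinearGuard C c strict := funext fun x => propext (hφR x)
  obtain rfl : φQ = ratLinearGuard C c strict :=
    funext fun x => by simp [hφQ, ratLinearGuard, ratAffine]
  constructor
  · rintro ⟨cst, h⟩
    refine ⟨cst, fun y => ?_⟩
    let F := Algebra.linearMap ℚ ℝ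
    have hF : F 1 = 1 := map_one (algebraMap ℚ ℝ)
    obtain ⟨i, hi, hx⟩ := h (F ∘ y)
    refine ⟨i, hi, fun hy => hx ?_⟩
    rw [← (semiconj_ratAffineUpdate F hF A b).iterate_right i y]
    exact ratLinearGuard_comp F hF (fun k => by simp [F]) hy
  · rintro ⟨cst, h⟩
    refine ⟨cst, fun x => ?_⟩
    by_contra! hx
    obtain ⟨G, hG, hpos⟩ := Real.exists_ratLinearMap_one_pos
      fun ik : Fin (cst + 1) × Fin m =>
        ratAffine (C ik.2) (c ik.2) ((ratAffineUpdate A b)^[ik.1] x)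
    obtain ⟨i, hi, hy⟩ := h (G ∘ x)
    refine hy ?_
    rw [← (semiconj_ratAffineUpdate G hG A b).iterate_right i x]
    exact ratLinearGuard_comp G hG (fun k => hpos (⟨i, by omega⟩, k)) (hx i hi)
end
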